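/- For the root system of type A₂ with Weyl group generated by s₁, s₂ and affine simple reflection s₀, and μ = ω₁∨ + ω₂∨ (so Adm(μ)∩W_aff·τ identified with the displayed poset), the poset {1, s₀, s₁, s₂, s₂s₀, s₀s₂, s₀s₁, s₁s₀, s₂s₁, s₁s₂, s₀s₂s₀, s₀s₁s₀, s₁s₂s₁} under Bruhat order is not 3-Cohen-Macaulay. -/
import Mathlib


/-!
Statement 18: the 13-element poset `{1, s₀, s₁, s₂, s₂s₀, s₀s₂, s₀s₁, s₁s₀,
s₂s₁, s₁s₂, s₀s₂s₀, s₀s₁s₀, s₁s₂s₁}` (the set `{}^K Adm(μ)₀` for type `A₂`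
with `μ = ω₁∨ + ω₂∨`, `K = ∅`) with the Bruhat order is not 3-Cohen-Macaulay.

We realize the poset explicitly:
* `e` is the identity `1`;
* `a i` is the simple reflection `sᵢ` (`i : Fin 3`);
* `d p b` are the six length-two elements: `p : Fin 3` records which pair of
  simple reflections occurs (`p = 0 ↔ {s₀,s₂}`, `p = 1 ↔ {s₀,s₁}`,
  `p = 2 ↔ {s₁,s₂}`), and `b : Bool` distinguishes the two orders
  (e.g. `d 0 false = s₂s₀`, `d 0 true = s₀s₂`);
* `top p` are the three maximal elements `s₀s₂s₀`, `s₀s₁s₀`, `s₁s₂s₁`.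

The covers are: `e ⋖ a i` for all `i`; `a i ⋖ d p b` iff `i` belongs to the
pair `p`; `d p b ⋖ top p`; exactly as in the paper's Figure 4.
-/

namespace A2Poset

inductive P : Type
  | e : P
  | a : Fin 3 → P
  | d : Fin 3 → Bool → P
  | top : Fin 3 → P
deriving DecidableEq

/-- `i` belongs to the pair `p` (pair `p` omits the index `p + 1`). -/
def mem (i p : Fin 3) : Prop := i ≠ p + 1

/-- the Bruhat order of the displayed poset. -/
def le : P → P → Prop
  | P.e, _ => True
  | P.a _, P.e => False
  | P.a i, P.a j => i = j
  | P.a i, P.d p _ => mem i p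
  | P.a i, P.top p => mem i p
  | P.d _ _, P.e => False
  | P.d _ _, P.a _ => False
  | P.d p b, P.d q c => p = q ∧ b = c
  | P.d p _, P.top q => p = q
  | P.top _, P.e => False
  | P.top _, P.a _ => False
  | P.top _, P.d _ _ => False
  | P.top p, P.top q => p = q

end A2Poset

namespace PosetCM

variable {P : Type*}

def covIn (r : P → P → Prop) (S : Set P) (x y : P) : Prop :=
  x ∈ S ∧ y ∈ S ∧ r x y ∧ x ≠ y ∧ ∀ z ∈ S, r x z → r z y → z = x ∨ z = y

def IsChainTD (r : P → P → Prop) (S : Set P) : List P → Prop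
  | [] => False
  | [x] => x ∈ S
  | x :: y :: l => covIn r S y x ∧ IsChainTD r S (y :: l)

def IsMaxElem (r : P → P → Prop) (S : Set P) (x : P) : Prop :=
  x ∈ S ∧ ∀ y ∈ S, r x y → y = x

def IsMinElem (r : P → P → Prop) (S : Set P) (x : P) : Prop :=
  x ∈ S ∧ ∀ y ∈ S, r y x → y = x

def IsMaxChain (r : P → P → Prop) (S : Set P) (c : List P) : Prop :=
  IsChainTD r S c ∧ (∀ x ∈ c.head?, IsMaxElem r S x) ∧ (∀ x ∈ c.getLast?, IsMinElem r S x)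

def intvl (r : P → P → Prop) (S : Set P) (x : P) : Set P := {z ∈ S | r z x}

def intvlo (r : P → P → Prop) (S : Set P) (x : P) : Set P := {z ∈ S | r z x ∧ z ≠ x}

def elemLen (r : P → P → Prop) (S : Set P) (z : P) (n : ℕ) : Prop :=
  ∃ c, IsMaxChain r (intvl r S z) c ∧ c.length = n + 1

/-- Görtz's recursive notion of an `N`-Cohen-Macaulay poset. -/
def IsCM (r : P → P → Prop) : ℕ → Set P → Prop
  | 0, S => ∃ x, IsMaxElem r S x ∧ (∀ y, IsMaxElem r S y → y = x) ∧ elemLen r S x 0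
  | (N+1), S =>
      (∃ x, IsMaxElem r S x ∧ (∀ y, IsMaxElem r S y → y = x) ∧ elemLen r S x (N+1)) ∨
      (∃ (k : ℕ) (x : Fin k → P), 2 ≤ k ∧ Function.Injective x ∧
        (∀ p, IsMaxElem r S p ↔ ∃ i, x i = p) ∧
        (∀ i, elemLen r S (x i) (N+1)) ∧
        (∀ j : Fin k, 0 < (j : ℕ) →
          IsCM r N (intvlo r S (x j) ∩
            {z | ∃ i : Fin k, (i : ℕ) < (j : ℕ) ∧ z ∈ intvlo r S (x i)})))

end PosetCM

open PosetCM

namespace A2Poset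

open P

lemma top_max (p : Fin 3) : IsMaxElem le (Set.univ : Set P) (top p) := by
  refine ⟨trivial, fun y _ hy => ?_⟩
  cases y with
  | e => exact absurd hy id
  | a i => exact absurd hy id
  | d q b => exact absurd hy id
  | top q => exact congrArg top hy.symm

lemma max_is_top (y : P) (hy : IsMaxElem le (Set.univ : Set P) y) :
    ∃ p, y = top p := by
  cases y with
  | e => exact P.noConfusion (hy.2 (top 0) trivial trivial)
  | a i =>
      have h : ∀ j : Fin 3, j ≠ j + 1 := by decide
      exact P.noConfusion (hy.2 (top i) trivial (h i))
  | d q b => exact P.noConfusion (hy.2 (top q) trivial rfl)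
  | top p => exact ⟨p, rfl⟩

lemma no_chain3 (T : Set P) (hT : ∀ z ∈ T, z = e ∨ ∃ i, z = a i) :
    ¬ ∃ c : List P, IsChainTD le T c ∧ c.length = 3 := by
  rintro ⟨c, hc, hl⟩
  match c, hl with
  | [c1, c2, c3], _ =>
    obtain ⟨h21, h32, _⟩ := hc
    have hc2 : c2 = e := by
      rcases hT c2 h21.1 with h | ⟨i, h⟩
      · exact h
      · subst h
        rcases hT c1 h21.2.1 with h' | ⟨j, h'⟩
        · subst h'; exact h21.2.2.1.elim
        · subst h'
          exact absurd (congrArg a h21.2.2.1) h21.2.2.2.1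
    subst hc2
    rcases hT c3 h32.1 with h | ⟨i, h⟩
    · exact h32.2.2.2.1 h
    · subst h; exact h32.2.2.1

lemma noCM2 (T : Set P) (hT : ∀ z ∈ T, z = e ∨ ∃ i, z = a i) :
    ¬ IsCM le 2 T := by
  intro h
  rcases h with ⟨m, _, _, hlen⟩ | ⟨k, x, hk, _, _, hlen, _⟩
  · obtain ⟨c, hc, hl⟩ := hlen
    exact no_chain3 (intvl le T m) (fun z hz => hT z hz.1) ⟨c, hc.1, hl⟩
  · obtain ⟨c, hc, hl⟩ := hlen ⟨0, by omega⟩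
    exact no_chain3 _ (fun z hz => hT z hz.1) ⟨c, hc.1, hl⟩

end A2Poset

/-- The displayed 13-element poset (`{}^∅ Adm(ω₁∨+ω₂∨)₀`
for type `A₂`) is not 3-Cohen-Macaulay. -/
theorem a2_poset_not_three_CM :
    ¬ IsCM A2Poset.le 3 (Set.univ : Set A2Poset.P) := by
  open A2Poset A2Poset.P in
  intro h
  rcases h with ⟨m, _, huniq, _⟩ | ⟨k, x, hk, hinj, hmax, _, hcm⟩
  · have h0 := huniq (top 0) (top_max 0)
    have h1 := huniq (top 1) (top_max 1)
    have h01 : top (0 : Fin 3) = top 1 := h0.trans h1.symm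
    have : (0 : Fin 3) = 1 := by injection h01
    exact absurd this (by decide)
  · have hk0 : (⟨0, by omega⟩ : Fin k) ≠ ⟨1, by omega⟩ := by
      intro h'
      have := congrArg Fin.val h'
      simp at this
    have hmax0 : IsMaxElem le (Set.univ : Set P) (x ⟨0, by omega⟩) :=
      (hmax _).2 ⟨_, rfl⟩
    have hmax1 : IsMaxElem le (Set.univ : Set P) (x ⟨1, by omega⟩) :=
      (hmax _).2 ⟨_, rfl⟩
    obtain ⟨p, hp⟩ := max_is_top _ hmax0
    obtain ⟨q, hq⟩ := max_is_top _ hmax1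
    have hpq : p ≠ q := by
      intro h'
      apply hk0
      apply hinj
      rw [hp, hq, h']
    have hcm1 := hcm ⟨1, by omega⟩ Nat.one_pos
    apply noCM2 _ ?_ hcm1
    rintro z ⟨hz1, hz2⟩
    obtain ⟨i, hi, hzi⟩ := hz2
    have hi0 : i = ⟨0, by omega⟩ := Fin.ext (by simpa using hi)
    rw [hi0, hp] at hzi
    rw [hq] at hz1
    obtain ⟨-, hzq, hznq⟩ := hz1
    obtain ⟨-, hzp, -⟩ := hzi
    cases z with
    | e => exact Or.inl rfl
    | a j => exact Or.inr ⟨j, rfl⟩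
    | d r b => exact absurd (hzp.symm.trans hzq) hpq
    | top r => exact absurd (congrArg top hzq) hznq
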